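/- Let G be a finite group, p a prime, and U a normal p-subgroup of G. Then the projection G → G/U induces a bijection between the set of conjugacy classes of p-regular elements of G and the set of conjugacy classes of p-regular elements of G/U. -/

import Mathlib

/-!
A `p`-regular class of `G ⧸ U` lifts: if the image of `x` has order `m` prime to `p`, then
`x ^ p ^ k` with `p ^ k ≡ 1 [MOD m]` and `k` large is `p`-regular and has the same image.

For injectivity, conjugate so that `x⁻¹ * y ∈ U`. If `U` is abelian, conjugation by `x⁻¹` lets the
cyclic group generated by `x` act on `U`, and `i ↦ x⁻ⁱ * yⁱ` is a `1`-cocycle for this action.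
Its period `orderOf x` is prime to `|U|`, so averaging over a period shows that it is a coboundary
`x⁻¹ * w * x * w⁻¹`, i.e. `y = w * x * w⁻¹`. A general `U` is handled by induction on `|U|`,
passing first to `G ⧸ Z(U)` and then applying the abelian case to `Z(U)`.
-/

open Finset
open scoped IsMulCommutative

theorem exists_map_div_eq_of_periodic_of_coprime {A : Type*} [CommGroup A] [Finite A]
    (σ : A →* A) (u : A) (c : ℕ → A) {m : ℕ} (hm : m.Coprime (Nat.card A))
    (hc : ∀ i, c (i + 1) = σ (c i) * u) (hcm : c m = c 0) :
    ∃ w, σ w / w = u := by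
  set P := ∏ i ∈ range m, c i
  have hP : P = σ P * u ^ m := calc
    P = ∏ i ∈ range m, c (i + 1) := by
      have h := (prod_range_succ' c m).symm.trans (prod_range_succ c m)
      rwa [hcm, mul_left_inj, eq_comm] at h
    _ = σ P * u ^ m := by simp only [hc, prod_mul_distrib, map_prod, prod_const, card_range, P]
  obtain ⟨k, hk⟩ := exists_pow_eq_self_of_coprime (hm.coprime_dvd_right (orderOf_dvd_natCard u))
  refine ⟨P⁻¹ ^ k, ?_⟩
  rw [map_pow, ← div_pow, map_inv, inv_div_inv, div_eq_of_eq_mul' hP, hk]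

theorem isConj_of_inv_mul_mem_of_coprime {G : Type*} [Group G] {U : Subgroup G} [U.Normal]
    [IsMulCommutative U] [Finite U] {x y : G} (hxy : x⁻¹ * y ∈ U) {m : ℕ} (hx : x ^ m = 1)
    (hy : y ^ m = 1) (hm : m.Coprime (Nat.card U)) : IsConj x y := by
  have hc (i : ℕ) : (x ^ i)⁻¹ * y ^ i ∈ U := by
    induction i with
    | zero => simp
    | succ i ih =>
      convert mul_mem (‹U.Normal›.conj_mem _ ih x⁻¹) hxy using 1
      group
  obtain ⟨w, hw⟩ := exists_map_div_eq_of_periodic_of_coprime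
    (MulAut.conjNormal x⁻¹).toMonoidHom ⟨_, hxy⟩ (fun i => ⟨_, hc i⟩) hm
    (fun i => Subtype.ext (show (x ^ (i + 1))⁻¹ * y ^ (i + 1) =
      x⁻¹ * ((x ^ i)⁻¹ * y ^ i) * x⁻¹⁻¹ * (x⁻¹ * y) by group)) (Subtype.ext (by simp [hx, hy]))
  refine isConj_iff.mpr ⟨w, ?_⟩
  simpa [div_eq_mul_inv, mul_assoc] using congrArg Subtype.val hw

theorem IsConj.orderOf_eq {G : Type*} [Group G] {x y : G} (h : IsConj x y) :
    orderOf x = orderOf y := by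
  obtain ⟨c, hc⟩ := h
  exact SemiconjBy.orderOf_eq (c : G) hc

theorem IsPGroup.pow_eq_one_of_mk_pow_eq_one {G : Type*} [Group G] {p : ℕ} {U : Subgroup G}
    [U.Normal] (hU : IsPGroup p U) {y : G} (hy : (orderOf y).Coprime p) {m : ℕ}
    (h : (y : G ⧸ U) ^ m = 1) : y ^ m = 1 := by
  obtain ⟨k, hk⟩ := hU ⟨y ^ m, (QuotientGroup.eq_one_iff _).mp (by rwa [QuotientGroup.mk_pow])⟩
  have hdvd : orderOf (y ^ m) ∣ p ^ k :=
    orderOf_dvd_of_pow_eq_one (by simpa using congrArg Subtype.val hk)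
  have hcop : (orderOf (y ^ m)).Coprime (p ^ k) :=
    (hy.coprime_dvd_left (orderOf_pow_dvd m)).pow_right k
  exact orderOf_eq_one_iff.mp (hcop.eq_one_of_dvd hdvd)

theorem isConj_of_isConj_mk_of_isMulCommutative {G : Type*} [Group G] {p : ℕ} [Fact p.Prime]
    {U : Subgroup G} [U.Normal] [IsMulCommutative U] [Finite U] (hU : IsPGroup p U)
    {x y : G} (hx : (orderOf x).Coprime p) (hy : (orderOf y).Coprime p)
    (h : IsConj (x : G ⧸ U) (y : G ⧸ U)) : IsConj x y := by
  obtain ⟨c, hc⟩ := isConj_iff.mp h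
  obtain ⟨g, rfl⟩ := QuotientGroup.mk_surjective c
  replace hc : ((g * x * g⁻¹ : G) : G ⧸ U) = y := hc
  have hgx : IsConj x (g * x * g⁻¹) := isConj_iff.mpr ⟨g, rfl⟩
  obtain ⟨n, hn⟩ := IsPGroup.iff_card.mp hU
  refine hgx.trans (isConj_of_inv_mul_mem_of_coprime (QuotientGroup.eq.mp hc)
    (pow_orderOf_eq_one _) (hU.pow_eq_one_of_mk_pow_eq_one hy ?_) ?_)
  · rw [← hc, ← QuotientGroup.mk_pow, pow_orderOf_eq_one, QuotientGroup.mk_one]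
  · rw [hn, ← hgx.orderOf_eq]
    exact hx.pow_right n

theorem Subgroup.card_map_lt_of_mem_ker {G G' : Type*} [Group G] [Group G'] {H : Subgroup G}
    [Finite H] {f : G →* G'} {z : G} (hzH : z ∈ H) (hz : z ≠ 1) (hzf : z ∈ f.ker) :
    Nat.card (H.map f) < Nat.card H := by
  refine (Nat.card_le_card_of_surjective _ (f.subgroupMap_surjective H)).lt_of_ne fun heq => ?_
  have hinj := ((f.subgroupMap_surjective H).bijective_of_nat_card_le heq.ge).injective
  exact hz (congrArg Subtype.val
    (hinj (a₁ := ⟨z, hzH⟩) (a₂ := 1) (Subtype.ext (by simpa using hzf))))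

theorem isConj_of_isConj_mk {G : Type*} [Group G] [Finite G] {p : ℕ} [Fact p.Prime]
    {U : Subgroup G} [U.Normal] (hU : IsPGroup p U) {x y : G} (hx : (orderOf x).Coprime p)
    (hy : (orderOf y).Coprime p) (h : IsConj (x : G ⧸ U) (y : G ⧸ U)) : IsConj x y := by
  induction hn : Nat.card U using Nat.strong_induction_on generalizing G with
  | _ n ih =>
  by_cases hcomm : IsMulCommutative U
  · exact isConj_of_isConj_mk_of_isMulCommutative hU hx hy h
  have : Nontrivial U :=
    not_subsingleton_iff_nontrivial.mp fun _ => hcomm ⟨⟨fun _ _ => Subsingleton.elim _ _⟩⟩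
  have := hU.center_nontrivial
  obtain ⟨z, hz⟩ := exists_ne (1 : Subgroup.center U)
  -- `Z` is normal in `G` because `Z(U)` is characteristic in `U`.
  set Z := (Subgroup.center U).map U.subtype
  set U' := U.map (QuotientGroup.mk' Z)
  have : U'.Normal := ‹U.Normal›.map _ (QuotientGroup.mk'_surjective Z)
  have hcard : Nat.card U' < n := hn ▸ Subgroup.card_map_lt_of_mem_ker (z : U).2
    (by simpa using hz) (by rw [QuotientGroup.ker_mk']; exact ⟨z, z.2, rfl⟩)
  have hxy' := (QuotientGroup.map U U' _ (Subgroup.le_comap_map _ U)).map_isConj h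
  exact isConj_of_isConj_mk_of_isMulCommutative (hU.to_le (Subgroup.map_subtype_le _)) hx hy
    (ih _ hcard (hU.map _) (hx.coprime_dvd_left (orderOf_map_dvd (QuotientGroup.mk' Z) x))
      (hy.coprime_dvd_left (orderOf_map_dvd (QuotientGroup.mk' Z) y)) hxy' rfl)

theorem exists_coprime_orderOf_map_eq {G H : Type*} [Group G] [Group H] {p : ℕ} [Fact p.Prime]
    (f : G →* H) {x : G} (hx : IsOfFinOrder x) (hfx : (orderOf (f x)).Coprime p) :
    ∃ y, (orderOf y).Coprime p ∧ f y = f x := by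
  set n := orderOf x
  set a := n.factorization p
  have hm : 0 < (orderOf (f x)).totient := Nat.totient_pos.mpr (f.isOfFinOrder hx).orderOf_pos
  set k := (orderOf (f x)).totient * a
  have hak : p ^ a ∣ p ^ k := pow_dvd_pow p (Nat.le_mul_of_pos_left a hm)
  refine ⟨x ^ p ^ k, ?_, ?_⟩
  · have h1 : (x ^ p ^ k) ^ (n / p ^ a) = 1 := by
      rw [← pow_mul, ← orderOf_dvd_iff_pow_eq_one]
      calc n = p ^ a * (n / p ^ a) := (Nat.ordProj_mul_ordCompl_eq_self n p).symm
        _ ∣ p ^ k * (n / p ^ a) := mul_dvd_mul_right hak _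
    exact (Nat.coprime_ordCompl Fact.out hx.orderOf_pos.ne').symm.coprime_dvd_left
      (orderOf_dvd_of_pow_eq_one h1)
  · rw [map_pow]
    conv_rhs => rw [← pow_one (f x)]
    rw [pow_eq_pow_iff_modEq, pow_mul]
    simpa using (Nat.ModEq.pow_totient hfx.symm).pow a

theorem ConjClasses.forall_mem_carrier_mk_coprime_orderOf_iff {G : Type*} [Group G] {p : ℕ}
    {x : G} : (∀ y ∈ (ConjClasses.mk x).carrier, (orderOf y).Coprime p) ↔ (orderOf x).Coprime p :=
  ⟨fun h => h x ConjClasses.mem_carrier_mk, fun h y hy => by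
    rwa [(ConjClasses.mk_eq_mk_iff_isConj.mp (ConjClasses.mem_carrier_iff_mk_eq.mp hy)).orderOf_eq]⟩

/-- Let `G` be a finite group, `p` a prime, and `U` a normal `p`-subgroup of `G`.
Then the projection `G → G ⧸ U` induces a bijection between the set of conjugacy classes
of `p`-regular elements of `G` and the set of conjugacy classes of `p`-regular elements
of `G ⧸ U`. -/
theorem bijOn_conjClasses_pRegular_of_normal_pSubgroup
    {G : Type*} [Group G] [Finite G] (p : ℕ) [Fact p.Prime]
    (U : Subgroup G) [U.Normal] (hU : IsPGroup p U) :
    Set.BijOn (ConjClasses.map (QuotientGroup.mk' U))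
      {c : ConjClasses G | ∀ x ∈ c.carrier, Nat.Coprime (orderOf x) p}
      {c : ConjClasses (G ⧸ U) | ∀ x ∈ c.carrier, Nat.Coprime (orderOf x) p} := by
  have hreg {H : Type _} [Group H] {x : H} :=
    ConjClasses.forall_mem_carrier_mk_coprime_orderOf_iff (p := p) (x := x)
  refine ⟨?mapsTo, ?injOn, ?surjOn⟩
  · refine ConjClasses.forall_isConj.mpr fun x hx => hreg.mpr ?_
    exact (hreg.mp hx).coprime_dvd_left (orderOf_map_dvd _ x)
  · refine ConjClasses.forall_isConj.mpr fun x hx => ConjClasses.forall_isConj.mpr fun y hy hxy => ?_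
    exact ConjClasses.mk_eq_mk_iff_isConj.mpr (isConj_of_isConj_mk hU (hreg.mp hx) (hreg.mp hy)
      (ConjClasses.mk_eq_mk_iff_isConj.mp hxy))
  · refine ConjClasses.forall_isConj.mpr fun xb hxb => ?_
    obtain ⟨x, rfl⟩ := QuotientGroup.mk_surjective xb
    obtain ⟨y, hy, hyx⟩ :=
      exists_coprime_orderOf_map_eq (QuotientGroup.mk' U) (isOfFinOrder_of_finite x) (hreg.mp hxb)
    exact ⟨ConjClasses.mk y, hreg.mpr hy, congrArg ConjClasses.mk hyx⟩
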